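/- arXiv:1803.08750 — 6 statements merged into one kernel-verified Lean document; each statement's English description precedes it below -/
import Mathlib

section
/- Let h be a Lie subalgebra of End(Rⁿ) all of whose elements are skew-symmetric with respect to the standard Euclidean inner product on Rⁿ (i.e. h ⊆ so(n,R)). Then the first prolongation h^(1) = 0. -/
/-!
Given `T` in the first prolongation, `S x y z = ⟪T(x, y), z⟫` is symmetric in `x, y`, and
skew-symmetric in `y, z` because `T(x, ·)` is skew. Alternately applying the two symmetries
six times returns `S` with a minus sign, so `S = 0`; taking `z = T(x, y)` gives `T = 0`.
-/

noncomputable section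

/-- Membership in the `k`-th prolongation of a set `h` of endomorphisms of a module `W`:
`T` is a symmetric `(k+1)`-multilinear map such that, fixing the first `k` arguments,
the resulting endomorphism belongs to `h`. -/
def InProl {K : Type*} [Field K] {W : Type*} [AddCommGroup W] [Module K W]
    (h : Set (Module.End K W)) (k : ℕ)
    (T : MultilinearMap K (fun _ : Fin (k+1) => W) W) : Prop :=
  (∀ (σ : Equiv.Perm (Fin (k+1))) (v : Fin (k+1) → W), (T fun i => v (σ i)) = T v) ∧
  (∀ v : Fin k → W, ∃ A ∈ h, ∀ w : W, A w = T (Fin.snoc v w))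

attribute [local instance 100] LieRing.ofAssociativeRing

theorem eq_zero_of_symm_left_of_antisymm_right {α M : Type*} [AddCommGroup M]
    [IsAddTorsionFree M] {S : α → α → α → M} (hsymm : ∀ x y z, S x y z = S y x z)
    (hanti : ∀ x y z, S x y z = -S x z y) (x y z : α) : S x y z = 0 := by
  have hneg : S x y z = -S x y z := calc
    S x y z = -S x z y := hanti x y z
    _ = -S z x y := by rw [hsymm x z y]
    _ = S z y x := by rw [hanti z x y, neg_neg]
    _ = S y z x := hsymm z y x
    _ = -S y x z := hanti y z x
    _ = -S x y z := by rw [hsymm y x z]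
  apply nsmul_right_injective (M := M) two_ne_zero
  simp only [two_nsmul, smul_zero]
  exact (eq_neg_iff_add_eq_zero).mp hneg

namespace InProl

variable {K W : Type*} [Field K] [AddCommGroup W] [Module K W] {h : Set (Module.End K W)}
  {T : MultilinearMap K (fun _ : Fin 2 => W) W}

theorem apply_comm (hT : InProl h 1 T) (x y : W) : T ![x, y] = T ![y, x] := by
  rw [← hT.1 (Equiv.swap 0 1) ![y, x]]
  congr 1
  ext i
  fin_cases i <;> rfl

theorem exists_mem_apply_eq (hT : InProl h 1 T) (x : W) : ∃ A ∈ h, ∀ w, A w = T ![x, w] := by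
  obtain ⟨A, hA, hAT⟩ := hT.2 ![x]
  refine ⟨A, hA, fun w => ?_⟩
  rw [hAT]
  congr 1
  ext i
  fin_cases i <;> rfl

theorem eq_zero_of_skew [CharZero K] (b : W → W → K) (hb_comm : ∀ x y, b x y = b y x)
    (hb_aniso : ∀ v, b v v = 0 → v = 0) (hskew : ∀ A ∈ h, ∀ x y, b (A x) y + b x (A y) = 0)
    (hT : InProl h 1 T) : T = 0 := by
  have hanti : ∀ x y z, b (T ![x, y]) z = -b (T ![x, z]) y := fun x y z => by
    obtain ⟨A, hA, hAT⟩ := hT.exists_mem_apply_eq x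
    rw [← hAT, ← hAT, hb_comm (A z), eq_neg_iff_add_eq_zero]
    exact hskew A hA y z
  have hS := eq_zero_of_symm_left_of_antisymm_right
    (S := fun x y z => b (T ![x, y]) z) (fun x y z => by rw [hT.apply_comm x y]) hanti
  ext v
  have hv : v = ![v 0, v 1] := by
    ext i
    fin_cases i <;> rfl
  rw [hv, hb_aniso _ (hS _ _ _)]
  rfl

end InProl

/-- any Lie subalgebra of `so(n,ℝ)` has trivial first prolongation. -/
theorem skew_symmetric_subalgebra_first_prolongation_trivial {n : ℕ}
    (h : LieSubalgebra ℝ (Module.End ℝ (Fin n → ℝ)))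
    (hskew : ∀ A ∈ h, ∀ x y : Fin n → ℝ,
      (∑ i, A x i * y i) + (∑ i, x i * A y i) = 0) :
    ∀ T : MultilinearMap ℝ (fun _ : Fin 2 => (Fin n → ℝ)) (Fin n → ℝ),
      InProl (h : Set (Module.End ℝ (Fin n → ℝ))) 1 T → T = 0 :=
  fun _ hT => hT.eq_zero_of_skew dotProduct dotProduct_comm
    (fun _ => dotProduct_self_eq_zero.mp) hskew
end
end

section
/- Let ρ : sl₂(R) → End(R⁴) be the irreducible 4-dimensional representation of sl₂(R) on binary cubic forms: in the basis (v₀, v₁, v₂, v₃) of R⁴ it is determined by ρ(e): v₀ ↦ 0, v₁ ↦ v₀, v₂ ↦ 2v₁, v₃ ↦ 3v₂; ρ(f): v₀ ↦ 3v₁, v₁ ↦ 2v₂, v₂ ↦ v₃, v₃ ↦ 0; ρ(h): v_i ↦ (3 - 2i)·v_i, where (e, f, h) is the standard basis of sl₂(R) with [h,e] = 2e, [h,f] = -2f, [e,f] = h. Then the Lie subalgebra ρ(sl₂(R)) ⊆ End(R⁴) has trivial first prolongation, and consequently all its prolongations vanish: ρ(sl₂(R))^(k) = 0 for all k ≥ 1.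 -/
noncomputable section

/-- The image `ρ(e)` of the standard generator `e` of `sl₂(ℝ)` under the irreducible
4-dimensional representation on binary cubics: `v₀ ↦ 0, v₁ ↦ v₀, v₂ ↦ 2v₁, v₃ ↦ 3v₂`. -/
def repE : Module.End ℝ (Fin 4 → ℝ) :=
  Matrix.toLin' !![0,1,0,0; 0,0,2,0; 0,0,0,3; 0,0,0,0]

/-- `ρ(f)`: `v₀ ↦ 3v₁, v₁ ↦ 2v₂, v₂ ↦ v₃, v₃ ↦ 0`. -/
def repF : Module.End ℝ (Fin 4 → ℝ) :=
  Matrix.toLin' !![0,0,0,0; 3,0,0,0; 0,2,0,0; 0,0,1,0]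

/-- `ρ(h)`: `v_i ↦ (3 - 2i)·v_i`. -/
def repH : Module.End ℝ (Fin 4 → ℝ) :=
  Matrix.toLin' !![3,0,0,0; 0,1,0,0; 0,0,-1,0; 0,0,0,-3]

/-- The image `ρ(sl₂(ℝ)) ⊆ End(ℝ⁴)` of the irreducible 4-dimensional representation,
i.e. the linear span of `ρ(e), ρ(f), ρ(h)`. -/
def sl2Image : Set (Module.End ℝ (Fin 4 → ℝ)) :=
  (Submodule.span ℝ {repE, repF, repH} : Submodule ℝ (Module.End ℝ (Fin 4 → ℝ)))

/-! Writing `T(eᵢ, ·) = aᵢ ρ(e) + bᵢ ρ(f) + cᵢ ρ(h)` on the standard basis, the symmetry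
`T(eᵢ, eⱼ) = T(eⱼ, eᵢ)` is a homogeneous linear system in the twelve coefficients whose only
solution is zero, so the first prolongation vanishes. The higher ones then vanish as well, since
fixing one argument of an element of `h^(k+1)` gives an element of `h^(k)`. -/

section Prolongation

variable {K : Type*} [Field K] {W : Type*} [AddCommGroup W] [Module K W]
  {h : Set (Module.End K W)}

theorem InProl.curryLeft {k : ℕ} {T : MultilinearMap K (fun _ : Fin (k + 2) => W) W}
    (hT : InProl h (k + 1) T) (x : W) : InProl h k (T.curryLeft x) := by
  obtain ⟨hsym, hmem⟩ := hT
  refine ⟨fun σ v => ?_, fun v => ?_⟩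
  · have hcons :
        (fun i => (Fin.cons x v : Fin (k + 2) → W) (Equiv.Perm.decomposeFin.symm (0, σ) i))
          = Fin.cons x (fun i => v (σ i)) := by
      funext i
      cases i using Fin.cases <;> simp
    simp only [MultilinearMap.curryLeft_apply]
    rw [← hcons, hsym]
  · obtain ⟨A, hA, hAT⟩ := hmem (Fin.cons x v)
    exact ⟨A, hA, fun w => by
      rw [hAT, MultilinearMap.curryLeft_apply, Fin.cons_snoc_eq_snoc_cons]⟩

theorem InProl.eq_zero_of_first_trivial
    (h1 : ∀ T : MultilinearMap K (fun _ : Fin 2 => W) W, InProl h 1 T → T = 0)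
    {k : ℕ} (hk : 1 ≤ k) {T : MultilinearMap K (fun _ : Fin (k + 1) => W) W}
    (hT : InProl h k T) : T = 0 := by
  induction k, hk using Nat.le_induction with
  | base => exact h1 T hT
  | succ k _ ih =>
    ext u
    rw [← Fin.cons_self_tail u, ← MultilinearMap.curryLeft_apply, ih (hT.curryLeft (u 0))]
    rfl

theorem InProl.apply_swap {T : MultilinearMap K (fun _ : Fin 2 => W) W} (hT : InProl h 1 T)
    (x y : W) : T ![x, y] = T ![y, x] := by
  have hswap : (fun i => ![y, x] (Equiv.swap 0 1 i)) = ![x, y] := by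
    funext i
    fin_cases i <;> simp
  rw [← hT.1 (Equiv.swap 0 1) ![y, x], hswap]

theorem InProl.exists_mem_apply {T : MultilinearMap K (fun _ : Fin 2 => W) W}
    (hT : InProl h 1 T) (x : W) : ∃ A ∈ h, ∀ w, A w = T ![x, w] := by
  obtain ⟨A, hA, hAT⟩ := hT.2 ![x]
  refine ⟨A, hA, fun w => ?_⟩
  rw [hAT]
  congr 1
  funext i
  fin_cases i <;> simp [Fin.snoc]

end Prolongation

def sl2Elem (a b c : ℝ) : Module.End ℝ (Fin 4 → ℝ) := a • repE + b • repF + c • repH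

theorem mem_sl2Image_iff {A : Module.End ℝ (Fin 4 → ℝ)} :
    A ∈ sl2Image ↔ ∃ a b c, sl2Elem a b c = A :=
  Submodule.mem_span_triple

theorem sl2Elem_apply (a b c : ℝ) (v : Fin 4 → ℝ) :
    sl2Elem a b c v = ![3 * c * v 0 + a * v 1, 3 * b * v 0 + c * v 1 + 2 * a * v 2,
      2 * b * v 1 - c * v 2 + 3 * a * v 3, b * v 2 - 3 * c * v 3] := by
  funext i
  fin_cases i <;>
    simp [sl2Elem, repE, repF, repH, Matrix.toLin'_apply, dotProduct,
      Fin.sum_univ_four] <;> ring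

theorem sl2Elem_coeffs_eq_zero (a b c : Fin 4 → ℝ)
    (hsym : ∀ i j, sl2Elem (a i) (b i) (c i) (Pi.single j 1)
      = sl2Elem (a j) (b j) (c j) (Pi.single i 1)) :
    a = 0 ∧ b = 0 ∧ c = 0 := by
  have h01 := hsym 0 1
  have h02 := hsym 0 2
  have h03 := hsym 0 3
  have h12 := hsym 1 2
  have h13 := hsym 1 3
  simp only [Fin.isValue, sl2Elem_apply, Nat.succ_eq_add_one, Nat.reduceAdd, ne_eq, zero_ne_one,
    not_false_eq_true, Pi.single_eq_of_ne, mul_zero, Pi.single_eq_same, mul_one, zero_add,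
    Fin.reduceEq, add_zero, sub_zero, sub_self, one_ne_zero, Matrix.vecCons_inj, mul_eq_zero,
    OfNat.ofNat_ne_zero, false_or, and_true, zero_sub, zero_eq_mul, neg_eq_zero]
    at h01 h02 h03 h12 h13
  refine ⟨funext fun i => ?_, funext fun i => ?_, funext fun i => ?_⟩ <;>
    fin_cases i <;>
    simp only [Fin.isValue, Fin.zero_eta, Fin.mk_one, Fin.reduceFinMk, Pi.zero_apply] <;>
    linarith

theorem sl2Image_inProl_one_eq_zero
    (T : MultilinearMap ℝ (fun _ : Fin 2 => (Fin 4 → ℝ)) (Fin 4 → ℝ))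
    (hT : InProl sl2Image 1 T) : T = 0 := by
  have hcoeffs : ∀ i : Fin 4, ∃ a b c, ∀ w, sl2Elem a b c w = T ![Pi.single i 1, w] := by
    intro i
    obtain ⟨A, hA, hAT⟩ := hT.exists_mem_apply (Pi.single i 1)
    obtain ⟨a, b, c, rfl⟩ := mem_sl2Image_iff.1 hA
    exact ⟨a, b, c, hAT⟩
  choose a b c habc using hcoeffs
  obtain ⟨rfl, rfl, rfl⟩ :=
    sl2Elem_coeffs_eq_zero a b c fun i j => by rw [habc, habc, hT.apply_swap]
  refine Module.Basis.ext_multilinear (fun _ => Pi.basisFun ℝ (Fin 4)) fun v => ?_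
  have hv : (fun i => Pi.basisFun ℝ (Fin 4) (v i)) = ![Pi.single (v 0) 1, Pi.single (v 1) 1] := by
    funext i
    fin_cases i <;> simp
  rw [hv, ← habc]
  simp [sl2Elem]

/-- the irreducible subalgebra `sl₂⁴(ℝ) = ρ(sl₂(ℝ)) ⊆ End(ℝ⁴)` has trivial
first prolongation, and all its prolongations vanish. -/
theorem sl2_irreducible_four_dim_prolongations_trivial :
    (∀ T : MultilinearMap ℝ (fun _ : Fin 2 => (Fin 4 → ℝ)) (Fin 4 → ℝ),
      InProl sl2Image 1 T → T = 0) ∧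
    (∀ k : ℕ, 1 ≤ k →
      ∀ T : MultilinearMap ℝ (fun _ : Fin (k+1) => (Fin 4 → ℝ)) (Fin 4 → ℝ),
        InProl sl2Image k T → T = 0) :=
  ⟨sl2Image_inProl_one_eq_zero,
    fun _ hk _ hT => hT.eq_zero_of_first_trivial sl2Image_inProl_one_eq_zero hk⟩
end
end

section
/- Let R[[y]] be the ring of formal power series in one variable over R, let m = y·R[[y]] be the subspace of series with zero constant term, and consider the linear operators D = d/dy (formal derivative) and E = y·(d/dy) on R[[y]]. (1) If ξ ⊆ m is a nonzero finite-dimensional linear subspace with E(ξ) ⊆ ξ and D(ξ) ⊆ ξ + R·1, then ξ = span(y, y², …, y^k) for some integer k ≥ 1. (2) There is no nonzero finite-dimensional linear subspace ξ ⊆ m satisfying E(ξ) ⊆ ξ, D(ξ) ⊆ ξ + R·1, and (y²·(d/dy))(ξ) ⊆ ξ. -/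
/-!
The Euler operator `E = y d/dy` multiplies `y^n` by `n`, so its eigenvalues on monomials are
pairwise distinct. Hence a finite-dimensional `E`-invariant subspace `ξ` is spanned by the
monomials it contains: a polynomial in `E` isolates each nonzero coefficient of any `f ∈ ξ`.
Since `ξ ⊆ y ℝ[[y]]`, the monomial `1` is excluded, and `D y^(n+1) = (n+1) y^n` modulo constants
shows that the exponents present form an interval `{1, …, k}`. For (2), `y² D y^k = k y^(k+1)`
would force the exponent `k + 1` into `ξ`.
-/

noncomputable section

/-- The formal derivative `d/dy` on the ring of formal power series `ℝ[[y]]`. -/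
def Dop (f : PowerSeries ℝ) : PowerSeries ℝ :=
  PowerSeries.mk fun n => ((n : ℝ) + 1) * PowerSeries.coeff (n + 1) f

open Polynomial in
theorem Module.End.exists_aeval_apply_eq_zero {K V : Type*} [Field K] [AddCommGroup V]
    [Module K V] {T : Module.End K V} {W : Submodule K V} [FiniteDimensional K W]
    (hW : W ≤ W.comap T) {v : V} (hv : v ∈ W) :
    ∃ p : K[X], p ≠ 0 ∧ aeval T p v = 0 := by
  by_contra! h
  let φ : K[X] →ₗ[K] W := LinearMap.codRestrict W
    (LinearMap.applyₗ v ∘ₗ (aeval T).toLinearMap)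
    fun p => aeval_apply_smul_mem_of_le_comap hv p T hW
  have hφ : Function.Injective φ := by
    rw [← LinearMap.ker_eq_bot, LinearMap.ker_eq_bot']
    intro p hp
    by_contra hp0
    exact h p hp0 (congrArg Subtype.val hp)
  exact Polynomial.not_finite (Module.Finite.of_injective φ hφ)

namespace PowerSeries

theorem linearIndependent_X_pow (R : Type*) [CommSemiring R] :
    LinearIndependent R fun n : ℕ => (X : R⟦X⟧) ^ n := by
  have hX : (fun n : ℕ => (X : R⟦X⟧) ^ n) =
      (Polynomial.coeToPowerSeries.algHom R).toLinearMap ∘ Polynomial.basisMonomials R := by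
    ext1 n
    simp [X_pow_eq]
  rw [hX]
  exact (Polynomial.basisMonomials R).linearIndependent.map_injOn _
    (Polynomial.coe_injective R).injOn

theorem finite_setOf_X_pow_mem {K : Type*} [Field K] (W : Submodule K K⟦X⟧)
    [FiniteDimensional K W] : {n : ℕ | (X : K⟦X⟧) ^ n ∈ W}.Finite := by
  let S := {n : ℕ | (X : K⟦X⟧) ^ n ∈ W}
  have hli : LinearIndependent K fun n : S => (⟨X ^ (n : ℕ), n.2⟩ : W) :=
    .of_comp W.subtype ((linearIndependent_X_pow K).comp _ Subtype.val_injective)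
  exact Set.finite_coe_iff.mp hli.finite

theorem mem_span_X_pow_of_coeff_eq_zero {R : Type*} [CommSemiring R] {s : Set ℕ}
    (hs : s.Finite) {f : R⟦X⟧} (hf : ∀ n ∉ s, coeff n f = 0) :
    f ∈ Submodule.span R ((X ^ ·) '' s) := by
  have hsum : f = ∑ n ∈ hs.toFinset, coeff n f • X ^ n := by
    ext m
    by_cases hm : m ∈ s <;> simp [coeff_X_pow, hm, hf]
  rw [hsum]
  exact Submodule.sum_mem _ fun n hn =>
    Submodule.smul_mem _ _ (Submodule.subset_span ⟨n, hs.mem_toFinset.mp hn, rfl⟩)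

section Euler

variable {R : Type*} [CommSemiring R]

variable (R) in
def eulerOp : Module.End R R⟦X⟧ where
  toFun f := mk fun n => (n : R) * coeff n f
  map_add' f g := by ext n; simp [mul_add]
  map_smul' c f := by ext n; simp [mul_left_comm]

@[simp]
theorem coeff_eulerOp (f : R⟦X⟧) (n : ℕ) : coeff n (eulerOp R f) = n * coeff n f := by
  simp [eulerOp]

theorem coeff_aeval_eulerOp (p : Polynomial R) (f : R⟦X⟧) (n : ℕ) :
    coeff n (Polynomial.aeval (eulerOp R) p f) = p.eval (n : R) * coeff n f := by
  induction p using Polynomial.induction_on with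
  | C a => simp [Module.algebraMap_end_apply]
  | add p q hp hq => simp [hp, hq, add_mul]
  | monomial k a ih =>
    rw [pow_succ', mul_left_comm, map_mul, Polynomial.aeval_X, Module.End.mul_apply,
      coeff_eulerOp, ih]
    simp [mul_assoc]

variable {K : Type*} [Field K] {W : Submodule K K⟦X⟧} [FiniteDimensional K W]

theorem X_pow_mem_of_coeff_ne_zero [CharZero K] (hW : W ≤ W.comap (eulerOp K)) {f : K⟦X⟧}
    (hf : f ∈ W) {n : ℕ} (hn : coeff n f ≠ 0) : X ^ n ∈ W := by
  obtain ⟨p, hp, hpf⟩ := Module.End.exists_aeval_apply_eq_zero hW hf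
  -- Stripping every factor `X - n` off an annihilating polynomial of `f` leaves `q` with
  -- `q(n) ≠ 0` but `q(m) = 0` at every other exponent `m` where `f` has a nonzero coefficient.
  obtain ⟨q, hpq, hq⟩ := p.exists_eq_pow_rootMultiplicity_mul_and_not_dvd hp (n : K)
  have hqn : q.eval (n : K) ≠ 0 := fun h => hq (Polynomial.dvd_iff_isRoot.mpr h)
  have hqf : Polynomial.aeval (eulerOp K) q f = (q.eval (n : K) * coeff n f) • X ^ n := by
    ext m
    rw [coeff_aeval_eulerOp, coeff_smul, coeff_X_pow]
    split_ifs with hmn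
    · simp [hmn]
    · have hm : p.eval (m : K) * coeff m f = 0 := by
        rw [← coeff_aeval_eulerOp, hpf, map_zero]
      have hmn' : ((m : K) - n) ^ p.rootMultiplicity (n : K) ≠ 0 :=
        pow_ne_zero _ (sub_ne_zero.mpr (Nat.cast_injective.ne hmn))
      rw [hpq] at hm
      simpa [mul_assoc, hmn'] using hm
  have hmem := Polynomial.aeval_apply_smul_mem_of_le_comap hf q _ hW
  rw [hqf] at hmem
  exact (W.smul_mem_iff (mul_ne_zero hqn hn)).mp hmem

theorem eq_span_X_pow_of_le_comap_eulerOp [CharZero K] (hW : W ≤ W.comap (eulerOp K)) :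
    W = Submodule.span K ((X ^ ·) '' {n | X ^ n ∈ W}) := by
  refine le_antisymm (fun f hf => ?_) (Submodule.span_le.mpr ?_)
  · refine mem_span_X_pow_of_coeff_eq_zero (finite_setOf_X_pow_mem W) fun n hn => ?_
    by_contra h
    exact hn (X_pow_mem_of_coeff_ne_zero hW hf h)
  · rintro _ ⟨n, hn, rfl⟩
    exact hn

end Euler

end PowerSeries

theorem Nat.exists_eq_Icc_one_of_pred_mem {S : Set ℕ} (hfin : S.Finite) (hne : S.Nonempty)
    (h0 : 0 ∉ S) (hpred : ∀ n, 1 ≤ n → n + 1 ∈ S → n ∈ S) : ∃ k, 1 ≤ k ∧ S = Set.Icc 1 k := by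
  have hk : sSup S ∈ S := Nat.sSup_mem hne hfin.bddAbove
  have hpos : ∀ n ∈ S, 1 ≤ n := fun n hn => Nat.one_le_iff_ne_zero.mpr (ne_of_mem_of_not_mem hn h0)
  refine ⟨sSup S, hpos _ hk, Set.ext fun n => ⟨fun hn => ⟨hpos n hn, le_csSup hfin.bddAbove hn⟩,
    fun hn => ?_⟩⟩
  exact Nat.decreasingInduction' (fun m _ hm => hpred m (hn.1.trans hm)) hn.2 hk

open PowerSeries

theorem X_mul_Dop (f : ℝ⟦X⟧) : X * Dop f = eulerOp ℝ f := by
  ext (_ | n)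
  · simp
  · rw [coeff_succ_X_mul, coeff_eulerOp, Dop, coeff_mk]
    push_cast
    ring

theorem Dop_X_pow_succ (n : ℕ) : Dop (X ^ (n + 1)) = ((n : ℝ) + 1) • (X : ℝ⟦X⟧) ^ n := by
  ext m
  by_cases h : m = n <;> simp [Dop, coeff_X_pow, h]

theorem le_comap_eulerOp_of_X_mul_Dop_mem {ξ : Submodule ℝ ℝ⟦X⟧}
    (hE : ∀ f ∈ ξ, X * Dop f ∈ ξ) : ξ ≤ ξ.comap (eulerOp ℝ) := fun f hf => by
  simpa only [Submodule.mem_comap, ← X_mul_Dop] using hE f hf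

theorem X_pow_mem_of_X_pow_succ_mem {ξ : Submodule ℝ ℝ⟦X⟧}
    (h0 : ∀ f ∈ ξ, constantCoeff f = 0) (hD : ∀ f ∈ ξ, ∃ g ∈ ξ, ∃ c : ℝ, Dop f = g + C c)
    {n : ℕ} (hn : 1 ≤ n) (h : X ^ (n + 1) ∈ ξ) : X ^ n ∈ ξ := by
  obtain ⟨g, hg, c, hc⟩ := hD _ h
  rw [Dop_X_pow_succ] at hc
  have hc0 : c = 0 := by
    simpa [h0 g hg, zero_pow (by omega : n ≠ 0)] using (congrArg constantCoeff hc).symm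
  rw [hc0, map_zero, add_zero] at hc
  exact (ξ.smul_mem_iff (by positivity)).mp (hc ▸ hg)

theorem setOf_X_pow_mem_eq_Icc {ξ : Submodule ℝ ℝ⟦X⟧} [FiniteDimensional ℝ ξ] (hne : ξ ≠ ⊥)
    (h0 : ∀ f ∈ ξ, constantCoeff f = 0) (hW : ξ ≤ ξ.comap (eulerOp ℝ))
    (hD : ∀ f ∈ ξ, ∃ g ∈ ξ, ∃ c : ℝ, Dop f = g + C c) :
    ∃ k, 1 ≤ k ∧ {n | (X : ℝ⟦X⟧) ^ n ∈ ξ} = Set.Icc 1 k := by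
  refine Nat.exists_eq_Icc_one_of_pred_mem (finite_setOf_X_pow_mem ξ) ?_ ?_
    fun n hn h => X_pow_mem_of_X_pow_succ_mem h0 hD hn h
  · rw [Set.nonempty_iff_ne_empty]
    intro hS
    rw [eq_span_X_pow_of_le_comap_eulerOp hW, hS, Set.image_empty, Submodule.span_empty] at hne
    exact hne rfl
  · intro h
    simpa using h0 _ h

theorem X_sq_mul_Dop_X_pow_succ (n : ℕ) :
    X ^ 2 * Dop (X ^ (n + 1)) = ((n : ℝ) + 1) • (X : ℝ⟦X⟧) ^ (n + 2) := by
  rw [Dop_X_pow_succ, mul_smul_comm, ← pow_add, add_comm 2]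

/-- (1) a nonzero finite-dimensional subspace `ξ` of `y·ℝ[[y]]` invariant
under `E = y·d/dy` and invariant modulo constants under `D = d/dy` equals
`span(y, y², …, y^k)` for some `k ≥ 1`; (2) no such nonzero subspace is in addition
invariant under `y²·d/dy`. -/
theorem invariant_subspaces_of_power_series :
    (∀ ξ : Submodule ℝ (PowerSeries ℝ), FiniteDimensional ℝ ξ → ξ ≠ ⊥ →
      (∀ f ∈ ξ, PowerSeries.constantCoeff f = 0) →
      (∀ f ∈ ξ, (PowerSeries.X : PowerSeries ℝ) * Dop f ∈ ξ) →
      (∀ f ∈ ξ, ∃ g ∈ ξ, ∃ c : ℝ, Dop f = g + PowerSeries.C c) →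
      ∃ k : ℕ, 1 ≤ k ∧
        ξ = Submodule.span ℝ
          ((fun i : ℕ => (PowerSeries.X : PowerSeries ℝ) ^ i) '' Set.Icc 1 k)) ∧
    (¬ ∃ ξ : Submodule ℝ (PowerSeries ℝ), FiniteDimensional ℝ ξ ∧ ξ ≠ ⊥ ∧
      (∀ f ∈ ξ, PowerSeries.constantCoeff f = 0) ∧
      (∀ f ∈ ξ, (PowerSeries.X : PowerSeries ℝ) * Dop f ∈ ξ) ∧
      (∀ f ∈ ξ, ∃ g ∈ ξ, ∃ c : ℝ, Dop f = g + PowerSeries.C c) ∧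
      (∀ f ∈ ξ, (PowerSeries.X : PowerSeries ℝ) ^ 2 * Dop f ∈ ξ)) := by
  refine ⟨fun ξ _ hne h0 hE hD => ?_, fun ⟨ξ, _, hne, h0, hE, hD, hF⟩ => ?_⟩
  · have hW := le_comap_eulerOp_of_X_mul_Dop_mem hE
    obtain ⟨k, hk, hS⟩ := setOf_X_pow_mem_eq_Icc hne h0 hW hD
    exact ⟨k, hk, hS ▸ eq_span_X_pow_of_le_comap_eulerOp hW⟩
  · have hW := le_comap_eulerOp_of_X_mul_Dop_mem hE
    obtain ⟨k, hk, hS⟩ := setOf_X_pow_mem_eq_Icc hne h0 hW hD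
    obtain ⟨m, rfl⟩ := Nat.exists_eq_add_of_le' hk
    have hXk : X ^ (m + 1) ∈ ξ := (Set.ext_iff.mp hS (m + 1)).mpr ⟨hk, le_rfl⟩
    have hXk1 : X ^ (m + 2) ∈ ξ :=
      (ξ.smul_mem_iff (by positivity)).mp (X_sq_mul_Dop_X_pow_succ m ▸ hF _ hXk)
    exact absurd ((Set.ext_iff.mp hS (m + 2)).mp hXk1).2 (by omega)
end
end

section
/- Let (g, ω) be a symplectic Lie algebra. Then there is a unique bilinear product (x, y) ↦ x∘y on g satisfying ω(x∘y, z) = -ω(y, [x, z]) for all x, y, z ∈ g, and this product is a compatible left-symmetric structure: it satisfies (x∘y)∘z - x∘(y∘z) = (y∘x)∘z - y∘(x∘z) (left-symmetry) and x∘y - y∘x = [x, y] for all x, y, z ∈ g. -/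
/-!
Nondegeneracy identifies `L` with its dual, so the product is forced: `P x` is the `ω`-adjoint
of `-ad x`. The Jacobi identity makes `x ↦ P x` a representation, the cocycle identity says
exactly that `P x y - P y x = ⁅x, y⁆`, and left-symmetry is the combination of the two.
-/

theorem LinearMap.SeparatingLeft.injective {R M N P : Type*} [CommRing R] [AddCommGroup M]
    [Module R M] [AddCommGroup N] [Module R N] [AddCommGroup P] [Module R P]
    {B : M →ₗ[R] N →ₗ[R] P} (hB : B.SeparatingLeft) : Function.Injective B :=
  LinearMap.ker_eq_bot.mp (LinearMap.separatingLeft_iff_ker_eq_bot.mp hB)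

theorem LinearMap.BilinForm.Nondegenerate.exists_apply_eq {K V M N : Type*} [Field K]
    [AddCommGroup V] [Module K V] [FiniteDimensional K V] [AddCommGroup M] [Module K M]
    [AddCommGroup N] [Module K N] {B : LinearMap.BilinForm K V} (hB : B.Nondegenerate)
    (F : M →ₗ[K] N →ₗ[K] Module.Dual K V) : ∃ Φ : M →ₗ[K] N →ₗ[K] V, ∀ x y, B (Φ x y) = F x y :=
  ⟨F.compr₂ (B.toDual hB).symm, fun x y => by ext; simp⟩

namespace SymplecticLieAlgebra

section

variable {K L : Type*} [CommRing K] [LieRing L] [LieAlgebra K L] {ω : LinearMap.BilinForm K L}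
  {P : L →ₗ[K] L →ₗ[K] L}

theorem apply_lie_of_cocycle (halt : ω.IsAlt)
    (hcocycle : ∀ x y z : L, ω ⁅x, y⁆ z + ω ⁅y, z⁆ x + ω ⁅z, x⁆ y = 0) (x y z : L) :
    ω ⁅x, y⁆ z = ω x ⁅y, z⁆ - ω y ⁅x, z⁆ := by
  have h₁ : ω ⁅y, z⁆ x = -ω x ⁅y, z⁆ := (halt.neg_eq _ _).symm
  have h₂ : ω ⁅z, x⁆ y = ω y ⁅x, z⁆ := by
    rw [← lie_skew, map_neg, LinearMap.neg_apply, halt.neg_eq]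
  linear_combination hcocycle x y z - h₁ - h₂

theorem sub_swap_eq_lie (hω : ω.SeparatingLeft) (halt : ω.IsAlt)
    (hcocycle : ∀ x y z : L, ω ⁅x, y⁆ z + ω ⁅y, z⁆ x + ω ⁅z, x⁆ y = 0)
    (hP : ∀ x y z, ω (P x y) z = -ω y ⁅x, z⁆) (x y : L) : P x y - P y x = ⁅x, y⁆ :=
  hω.injective <| LinearMap.ext fun z => by
    rw [map_sub, LinearMap.sub_apply, hP, hP, apply_lie_of_cocycle halt hcocycle]
    ring

theorem apply_lie_eq_lie_apply (hω : ω.SeparatingLeft)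
    (hP : ∀ x y z, ω (P x y) z = -ω y ⁅x, z⁆) (x y : L) : P ⁅x, y⁆ = ⁅P x, P y⁆ := by
  ext z
  refine hω.injective <| LinearMap.ext fun w => ?_
  rw [LieRing.of_associative_ring_bracket, LinearMap.sub_apply, Module.End.mul_apply,
    Module.End.mul_apply, map_sub, LinearMap.sub_apply, hP, hP, hP, hP, hP, leibniz_lie x y w,
    map_add]
  ring

theorem leftSymmetric_of_sub_swap_eq_lie (hcomm : ∀ x y : L, P x y - P y x = ⁅x, y⁆)
    (hrep : ∀ x y : L, P ⁅x, y⁆ = ⁅P x, P y⁆) (x y z : L) :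
    P (P x y) z - P x (P y z) = P (P y x) z - P y (P x z) := by
  have h := LinearMap.congr_fun (hrep x y) z
  rw [← hcomm, map_sub, LinearMap.sub_apply, LieRing.of_associative_ring_bracket] at h
  rw [sub_eq_sub_iff_sub_eq_sub]
  exact h

end

theorem existsUnique_apply_eq_neg_apply_lie {K L : Type*} [Field K] [LieRing L] [LieAlgebra K L]
    [FiniteDimensional K L] {ω : LinearMap.BilinForm K L} (hω : ω.Nondegenerate) :
    ∃! P : L →ₗ[K] L →ₗ[K] L, ∀ x y z, ω (P x y) z = -ω y ⁅x, z⁆ := by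
  -- the bilinear map `x y ↦ -(ω y ∘ ad x)` into the dual
  obtain ⟨P, hP⟩ := hω.exists_apply_eq
    ((LinearMap.llcomp K L L K ∘ₗ (-ω)).flip ∘ₗ (LieAlgebra.ad K L : L →ₗ[K] Module.End K L))
  have hP' : ∀ x y z, ω (P x y) z = -ω y ⁅x, z⁆ := fun x y z => by
    simpa using LinearMap.congr_fun (hP x y) z
  refine ⟨P, hP', fun Q hQ => ?_⟩
  ext x y
  exact hω.1.injective <| LinearMap.ext fun z => by rw [hQ, hP']

end SymplecticLieAlgebra

/-- a symplectic Lie algebra `(g, ω)` carries a unique bilinear product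
with `ω(x∘y, z) = -ω(y, [x,z])`, and this product is a compatible left-symmetric
structure. -/
theorem symplectic_lie_algebra_left_symmetric_product
    {g : Type*} [LieRing g] [LieAlgebra ℝ g] [FiniteDimensional ℝ g]
    (ω : g →ₗ[ℝ] g →ₗ[ℝ] ℝ)
    (halt : ∀ x : g, ω x x = 0)
    (hnondeg : ∀ x : g, (∀ y : g, ω x y = 0) → x = 0)
    (hcocycle : ∀ x y z : g, ω ⁅x, y⁆ z + ω ⁅y, z⁆ x + ω ⁅z, x⁆ y = 0) :
    (∃! P : g →ₗ[ℝ] g →ₗ[ℝ] g, ∀ x y z : g, ω (P x y) z = - ω y ⁅x, z⁆) ∧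
    (∀ P : g →ₗ[ℝ] g →ₗ[ℝ] g, (∀ x y z : g, ω (P x y) z = - ω y ⁅x, z⁆) →
      ((∀ x y z : g, P (P x y) z - P x (P y z) = P (P y x) z - P y (P x z)) ∧
       (∀ x y : g, P x y - P y x = ⁅x, y⁆))) := by
  have hω : LinearMap.BilinForm.Nondegenerate ω := .ofSeparatingLeft hnondeg
  refine ⟨SymplecticLieAlgebra.existsUnique_apply_eq_neg_apply_lie hω, fun P hP => ?_⟩
  have hcomm := SymplecticLieAlgebra.sub_swap_eq_lie hnondeg halt hcocycle hP
  have hrep := SymplecticLieAlgebra.apply_lie_eq_lie_apply hnondeg hP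
  exact ⟨SymplecticLieAlgebra.leftSymmetric_of_sub_swap_eq_lie hcomm hrep, hcomm⟩
end

section
/- Let (g, ω) be a symplectic Lie algebra with compatible left-symmetric product ∘, and set L_x(y) = x∘y and R_x(y) = y∘x. Then for all x, y, z ∈ g: (1) ω(x∘y, z) + ω(z∘y, x) = 0; (2) ω(x∘y, z) + ω(y∘z, x) + ω(z∘x, y) = 0; (3) tr(R_x ∘ R_y) = tr(R_{x∘y}) = 2·tr(L_{x∘y}); (4) tr(R_x ∘ R_y) = 2·tr(R_y ∘ L_x) = 2·tr(R_x ∘ L_y), where tr denotes the trace of a linear endomorphism of g. -/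
/-!
With respect to `ω`, every `R_x` is self-adjoint and `L_x` is adjoint to `R_x - L_x`. Adjoint
endomorphisms have equal traces (conjugate by `ω : g ≃ g*` to the transpose), so
`tr R_z = 2 tr L_z`, and `R_y L_x`, being adjoint to `(R_x - L_x) R_y`, has half the trace of
`R_x R_y`. Left symmetry, read as `R_{x∘y} = R_y R_x - R_y L_x + L_x R_y`, gives
`tr R_{x∘y} = tr (R_x R_y)` by cyclicity of the trace.
-/

open LinearMap

theorem LinearMap.IsAdjointPair.trace_eq {K V : Type*} [Field K] [AddCommGroup V] [Module K V]
    [FiniteDimensional K V] {B : V →ₗ[K] V →ₗ[K] K} (hB : B.SeparatingLeft)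
    {f g : Module.End K V} (h : IsAdjointPair B B f g) : trace K V f = trace K V g := by
  let e := BilinForm.toDual B (.ofSeparatingLeft hB)
  have hconj : e.conj f = Module.Dual.transpose (R := K) g := by
    ext φ v
    change B (f (e.symm φ)) v = φ (g v)
    rw [h, BilinForm.apply_toDual_symm_apply]
  rw [← trace_conj' f e, hconj, trace_transpose']

section LeftSymmetric

variable {K M : Type*} [CommRing K] [AddCommGroup M] [Module K M] {P : M →ₗ[K] M →ₗ[K] M}

theorem LinearMap.flip_apply_eq_of_leftSymmetric
    (hP : ∀ x y z, P (P x y) z - P x (P y z) = P (P y x) z - P y (P x z)) (x y : M) :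
    P.flip (P x y) = P.flip y ∘ₗ P.flip x - P.flip y ∘ₗ P x + P x ∘ₗ P.flip y := by
  ext z
  have h := hP z x y
  simp only [add_apply, sub_apply, comp_apply, flip_apply]
  linear_combination (norm := module) -h

theorem LinearMap.trace_flip_comp_flip_of_leftSymmetric [Module.Free K M] [Module.Finite K M]
    (hP : ∀ x y z, P (P x y) z - P x (P y z) = P (P y x) z - P y (P x z)) (x y : M) :
    trace K M (P.flip x ∘ₗ P.flip y) = trace K M (P.flip (P x y)) := by
  rw [flip_apply_eq_of_leftSymmetric hP, map_add, map_sub, trace_comp_comm' (P.flip y) (P x),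
    trace_comp_comm' (P.flip x) (P.flip y)]
  ring

end LeftSymmetric

namespace SymplecticLieAlgebra

section CommRing

variable {K L : Type*} [CommRing K] [LieRing L] [LieAlgebra K L]
  {ω : L →ₗ[K] L →ₗ[K] K} {P : L →ₗ[K] L →ₗ[K] L}

theorem isAdjointPair_flip (hω : ω.IsAlt) (hP : ∀ x y z, ω (P x y) z = -ω y ⁅x, z⁆) (y : L) :
    IsAdjointPair ω ω (P.flip y) (P.flip y) := fun u v ↦ by
  rw [flip_apply, flip_apply, ← hω.neg (P v y), hP, hP, ← lie_skew, map_neg]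

theorem isAdjointPair_flip_sub (hP : ∀ x y z, ω (P x y) z = -ω y ⁅x, z⁆)
    (hPL : ∀ x y, P x y - P y x = ⁅x, y⁆) (x : L) :
    IsAdjointPair ω ω (P x) ⇑(P.flip x - P x) := fun u v ↦ by
  rw [hP, ← hPL, LinearMap.sub_apply, flip_apply, ← neg_sub, map_neg, neg_neg]

theorem form_mul_add_form_mul_eq_zero (hω : ω.IsAlt) (hP : ∀ x y z, ω (P x y) z = -ω y ⁅x, z⁆)
    (x y z : L) : ω (P x y) z + ω (P z y) x = 0 := by
  rw [show ω (P x y) z = ω x (P z y) from isAdjointPair_flip hω hP y x z, ← hω.neg,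
    neg_add_cancel]

theorem form_mul_cyclic_sum_eq_zero (hω : ω.IsAlt) (hP : ∀ x y z, ω (P x y) z = -ω y ⁅x, z⁆)
    (hPL : ∀ x y, P x y - P y x = ⁅x, y⁆) (x y z : L) :
    ω (P x y) z + ω (P y z) x + ω (P z x) y = 0 := by
  have hzx := form_mul_add_form_mul_eq_zero hω hP z x y
  have hyz : ω (P y z) x = -ω ⁅x, y⁆ z := by
    rw [hP, ← lie_skew, map_neg, neg_neg, hω.neg]
  have hxy := congrArg (ω · z) (hPL x y)
  simp only [map_sub, LinearMap.sub_apply] at hxy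
  linear_combination hzx + hyz + hxy

end CommRing

section Field

variable {K L : Type*} [Field K] [LieRing L] [LieAlgebra K L] [FiniteDimensional K L]
  {ω : L →ₗ[K] L →ₗ[K] K} {P : L →ₗ[K] L →ₗ[K] L}

theorem trace_flip_eq_two_mul_trace (hsep : ω.SeparatingLeft)
    (hP : ∀ x y z, ω (P x y) z = -ω y ⁅x, z⁆) (hPL : ∀ x y, P x y - P y x = ⁅x, y⁆) (x : L) :
    trace K L (P.flip x) = 2 * trace K L (P x) := by
  have h := (isAdjointPair_flip_sub hP hPL x).trace_eq hsep
  rw [map_sub] at h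
  linear_combination -h

theorem trace_flip_comp_flip_eq_two_mul_trace_flip_comp (hω : ω.IsAlt) (hsep : ω.SeparatingLeft)
    (hP : ∀ x y z, ω (P x y) z = -ω y ⁅x, z⁆) (hPL : ∀ x y, P x y - P y x = ⁅x, y⁆) (x y : L) :
    trace K L (P.flip x ∘ₗ P.flip y) = 2 * trace K L (P.flip y ∘ₗ P x) := by
  have hadj : IsAdjointPair ω ω (P.flip y ∘ₗ P x) ((P.flip x - P x) ∘ₗ P.flip y) :=
    (isAdjointPair_flip_sub hP hPL x).comp (isAdjointPair_flip hω hP y)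
  have h := hadj.trace_eq hsep
  rw [sub_comp, map_sub, trace_comp_comm' (P.flip y) (P x)] at h
  linear_combination -h

end Field

end SymplecticLieAlgebra

open SymplecticLieAlgebra in
theorem symplectic_lie_algebra_trace_identities_general
    {g : Type*} [LieRing g] [LieAlgebra ℝ g] [FiniteDimensional ℝ g]
    (ω : g →ₗ[ℝ] g →ₗ[ℝ] ℝ)
    (halt : ∀ x : g, ω x x = 0)
    (hnondeg : ∀ x : g, (∀ y : g, ω x y = 0) → x = 0)
    (P : g →ₗ[ℝ] g →ₗ[ℝ] g)
    (hdef : ∀ x y z : g, ω (P x y) z = - ω y ⁅x, z⁆)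
    (hls : ∀ x y z : g, P (P x y) z - P x (P y z) = P (P y x) z - P y (P x z))
    (hcomp : ∀ x y : g, P x y - P y x = ⁅x, y⁆) :
    (∀ x y z : g, ω (P x y) z + ω (P z y) x = 0) ∧
    (∀ x y z : g, ω (P x y) z + ω (P y z) x + ω (P z x) y = 0) ∧
    (∀ x y : g,
      LinearMap.trace ℝ g (P.flip x ∘ₗ P.flip y) = LinearMap.trace ℝ g (P.flip (P x y)) ∧
      LinearMap.trace ℝ g (P.flip (P x y)) = 2 * LinearMap.trace ℝ g (P (P x y))) ∧
    (∀ x y : g,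
      LinearMap.trace ℝ g (P.flip x ∘ₗ P.flip y) = 2 * LinearMap.trace ℝ g (P.flip y ∘ₗ P x) ∧
      LinearMap.trace ℝ g (P.flip x ∘ₗ P.flip y) = 2 * LinearMap.trace ℝ g (P.flip x ∘ₗ P y)) := by
  have hω : ω.IsAlt := halt
  have hRR := trace_flip_comp_flip_eq_two_mul_trace_flip_comp hω hnondeg hdef hcomp
  refine ⟨form_mul_add_form_mul_eq_zero hω hdef, form_mul_cyclic_sum_eq_zero hω hdef hcomp,
    fun x y ↦ ⟨trace_flip_comp_flip_of_leftSymmetric hls x y,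
      trace_flip_eq_two_mul_trace hnondeg hdef hcomp (P x y)⟩,
    fun x y ↦ ⟨hRR x y, ?_⟩⟩
  rw [trace_comp_comm', hRR y x]

/-- trace identities for the compatible left-symmetric product of a
symplectic Lie algebra.  Here `P x y = x∘y`, `L_x = P x` and `R_x = P.flip x`. -/
theorem symplectic_lie_algebra_trace_identities
    {g : Type*} [LieRing g] [LieAlgebra ℝ g] [FiniteDimensional ℝ g]
    (ω : g →ₗ[ℝ] g →ₗ[ℝ] ℝ)
    (halt : ∀ x : g, ω x x = 0)
    (hnondeg : ∀ x : g, (∀ y : g, ω x y = 0) → x = 0)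
    (hcocycle : ∀ x y z : g, ω ⁅x, y⁆ z + ω ⁅y, z⁆ x + ω ⁅z, x⁆ y = 0)
    (P : g →ₗ[ℝ] g →ₗ[ℝ] g)
    (hdef : ∀ x y z : g, ω (P x y) z = - ω y ⁅x, z⁆)
    (hls : ∀ x y z : g, P (P x y) z - P x (P y z) = P (P y x) z - P y (P x z))
    (hcomp : ∀ x y : g, P x y - P y x = ⁅x, y⁆) :
    (∀ x y z : g, ω (P x y) z + ω (P z y) x = 0) ∧
    (∀ x y z : g, ω (P x y) z + ω (P y z) x + ω (P z x) y = 0) ∧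
    (∀ x y : g,
      LinearMap.trace ℝ g (P.flip x ∘ₗ P.flip y) = LinearMap.trace ℝ g (P.flip (P x y)) ∧
      LinearMap.trace ℝ g (P.flip (P x y)) = 2 * LinearMap.trace ℝ g (P (P x y))) ∧
    (∀ x y : g,
      LinearMap.trace ℝ g (P.flip x ∘ₗ P.flip y) = 2 * LinearMap.trace ℝ g (P.flip y ∘ₗ P x) ∧
      LinearMap.trace ℝ g (P.flip x ∘ₗ P.flip y) = 2 * LinearMap.trace ℝ g (P.flip x ∘ₗ P y)) :=
  symplectic_lie_algebra_trace_identities_general ω halt hnondeg P hdef hls hcomp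
end

section
/- Let (g, ω) be a symplectic Lie algebra with compatible left-symmetric product ∘, L_x(y) = x∘y, and define the left trace form κ(x, y) = tr(L_x ∘ L_y). Then: (1) if κ = 0 (identically), the Lie algebra g is solvable; (2) if the Lie algebra g is nilpotent, then κ = 0. -/
/-!
Nondegeneracy of `ω` identifies `g` with its dual, and the defining identity of the product says
that `L_x` is the `ω`-adjoint of `-ad x`. Hence `L_x ∘ L_y` is conjugate to the transpose of
`ad y ∘ ad x`, so the left trace form is the transposed Killing form `κ(x, y) = B(y, x)`.
Both claims are then classical: a vanishing Killing form gives solvability by Cartan's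
criterion, and the Killing form of a nilpotent Lie algebra vanishes.
-/

namespace LinearMap

variable {K V : Type*} [Field K] [AddCommGroup V] [Module K V] [FiniteDimensional K V]

theorem SeparatingLeft.bijective {B : V →ₗ[K] V →ₗ[K] K} (hB : B.SeparatingLeft) :
    Function.Bijective B := by
  have hinj : Function.Injective B :=
    LinearMap.ker_eq_bot.mp (separatingLeft_iff_ker_eq_bot.mp hB)
  exact ⟨hinj, (injective_iff_surjective_of_finrank_eq_finrank
    (Subspace.dual_finrank_eq (V := V)).symm).mp hinj⟩

theorem IsAdjointPair.trace_eq_s17 {B : V →ₗ[K] V →ₗ[K] K} (hB : B.SeparatingLeft)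
    {f g : Module.End K V} (h : IsAdjointPair B B f g) : trace K V f = trace K V g := by
  let e : V ≃ₗ[K] Module.Dual K V := LinearEquiv.ofBijective B hB.bijective
  have hconj : f = e.symm.conj (Module.Dual.transpose (R := K) g) := by
    ext x
    apply e.injective
    ext y
    simp [e, LinearEquiv.conj_apply, Module.Dual.transpose_apply, h x y]
  rw [hconj, trace_conj', trace_transpose']

end LinearMap

theorem trace_comp_eq_killingForm_of_isAdjointPair_neg_ad
    {K g : Type*} [Field K] [LieRing g] [LieAlgebra K g] [FiniteDimensional K g]
    {ω : g →ₗ[K] g →ₗ[K] K} (hω : ω.SeparatingLeft) {P : g →ₗ[K] g →ₗ[K] g}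
    (hP : ∀ x, LinearMap.IsAdjointPair ω ω (P x) ⇑(-LieAlgebra.ad K g x)) (x y : g) :
    LinearMap.trace K g (P x ∘ₗ P y) = killingForm K g y x := by
  have hxy : LinearMap.IsAdjointPair ω ω (P x * P y)
      (-LieAlgebra.ad K g y * -LieAlgebra.ad K g x) := (hP x).mul (hP y)
  rw [← Module.End.mul_eq_comp, hxy.trace_eq_s17 hω, neg_mul_neg, killingForm_apply_apply]
  rfl

theorem symplectic_lie_algebra_left_trace_form_general
    {g : Type*} [LieRing g] [LieAlgebra ℝ g] [FiniteDimensional ℝ g]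
    (ω : g →ₗ[ℝ] g →ₗ[ℝ] ℝ)
    (hnondeg : ∀ x : g, (∀ y : g, ω x y = 0) → x = 0)
    (P : g →ₗ[ℝ] g →ₗ[ℝ] g)
    (hdef : ∀ x y z : g, ω (P x y) z = - ω y ⁅x, z⁆) :
    ((∀ x y : g, LinearMap.trace ℝ g (P x ∘ₗ P y) = 0) → LieAlgebra.IsSolvable g) ∧
    (LieRing.IsNilpotent g → ∀ x y : g, LinearMap.trace ℝ g (P x ∘ₗ P y) = 0) := by
  have hadj : ∀ x, LinearMap.IsAdjointPair ω ω (P x) ⇑(-LieAlgebra.ad ℝ g x) :=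
    fun x y z => by rw [hdef, LinearMap.neg_apply, LieAlgebra.ad_apply, map_neg]
  have hκ := trace_comp_eq_killingForm_of_isAdjointPair_neg_ad hnondeg hadj
  refine ⟨fun h0 => LieAlgebra.isSolvable_of_killingForm_apply_lie_eq_zero (R := ℝ)
    fun x y _ => ?_, fun _ x y => ?_⟩
  · rw [← hκ y x]
    exact h0 y x
  · simp [hκ, killingForm]

/-- for the compatible left-symmetric product of a symplectic Lie algebra,
vanishing of the left trace form `κ(x,y) = tr(L_x ∘ L_y)` implies solvability, and
nilpotency implies vanishing of `κ`. -/
theorem symplectic_lie_algebra_left_trace_form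
    {g : Type*} [LieRing g] [LieAlgebra ℝ g] [FiniteDimensional ℝ g]
    (ω : g →ₗ[ℝ] g →ₗ[ℝ] ℝ)
    (halt : ∀ x : g, ω x x = 0)
    (hnondeg : ∀ x : g, (∀ y : g, ω x y = 0) → x = 0)
    (hcocycle : ∀ x y z : g, ω ⁅x, y⁆ z + ω ⁅y, z⁆ x + ω ⁅z, x⁆ y = 0)
    (P : g →ₗ[ℝ] g →ₗ[ℝ] g)
    (hdef : ∀ x y z : g, ω (P x y) z = - ω y ⁅x, z⁆)
    (hls : ∀ x y z : g, P (P x y) z - P x (P y z) = P (P y x) z - P y (P x z))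
    (hcomp : ∀ x y : g, P x y - P y x = ⁅x, y⁆) :
    ((∀ x y : g, LinearMap.trace ℝ g (P x ∘ₗ P y) = 0) → LieAlgebra.IsSolvable g) ∧
    (LieRing.IsNilpotent g → ∀ x y : g, LinearMap.trace ℝ g (P x ∘ₗ P y) = 0) :=
  symplectic_lie_algebra_left_trace_form_general ω hnondeg P hdef
end
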